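/- arXiv:math/0512577 — 8 statements merged into one kernel-verified Lean document; each statement's English description precedes it below -/
import Mathlib

section
/- Let A be a special Z₂-graded associative algebra over a field k. Then the angle bracket ⟨x,y⟩ := x·π₀(y) − π₀(y)·x satisfies the right Leibniz identity: ⟨⟨x,y⟩,z⟩ = ⟨x,⟨y,z⟩⟩ + ⟨⟨x,z⟩,y⟩ for all x, y, z ∈ A. (Proposition 1.1) -/
/-- Proposition 1.1: the angle bracket of a special ℤ₂-graded associative algebra
satisfies the right Leibniz identity. -/
theorem angle_bracket_right_leibniz {k A : Type*} [Field k] [Ring A] [Algebra k A]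
    (A₀ A₁ : Submodule k A)
    (hsup : A₀ ⊔ A₁ = ⊤) (hinf : A₀ ⊓ A₁ = ⊥)
    (h00 : ∀ a ∈ A₀, ∀ b ∈ A₀, a * b ∈ A₀)
    (h01 : ∀ a ∈ A₀, ∀ b ∈ A₁, a * b ∈ A₁)
    (h10 : ∀ a ∈ A₁, ∀ b ∈ A₀, a * b ∈ A₁)
    (h11 : ∀ a ∈ A₁, ∀ b ∈ A₁, a * b = 0)
    (π₀ : A →ₗ[k] A)
    (hπmem : ∀ x : A, π₀ x ∈ A₀)
    (hπrest : ∀ x : A, x - π₀ x ∈ A₁)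
    (angle : A → A → A)
    (hangle : ∀ x y : A, angle x y = x * π₀ y - π₀ y * x)
    (x y z : A) :
    angle (angle x y) z = angle x (angle y z) + angle (angle x z) y := by
  -- uniqueness of the A₀-component
  have huniq : ∀ v u : A, u ∈ A₀ → v - u ∈ A₁ → π₀ v = u := by
    intro v u hu hv
    have h0 : π₀ v - u ∈ A₀ := sub_mem (hπmem v) hu
    have h1 : π₀ v - u ∈ A₁ := by
      have h := sub_mem hv (hπrest v)
      have e : v - u - (v - π₀ v) = π₀ v - u := by noncomm_ring
      rwa [e] at h
    have hm : π₀ v - u ∈ A₀ ⊓ A₁ := ⟨h0, h1⟩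
    rw [hinf] at hm
    exact sub_eq_zero.mp ((Submodule.mem_bot k).mp hm)
  -- π₀ of a bracket is the commutator of the π₀-parts
  have hπb : ∀ a b : A, π₀ (a * π₀ b - π₀ b * a) = π₀ a * π₀ b - π₀ b * π₀ a := by
    intro a b
    apply huniq
    · exact sub_mem (h00 _ (hπmem a) _ (hπmem b)) (h00 _ (hπmem b) _ (hπmem a))
    · have e : a * π₀ b - π₀ b * a - (π₀ a * π₀ b - π₀ b * π₀ a)
          = (a - π₀ a) * π₀ b - π₀ b * (a - π₀ a) := by noncomm_ring
      rw [e]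
      exact sub_mem (h10 _ (hπrest a) _ (hπmem b)) (h01 _ (hπmem b) _ (hπrest a))
  simp only [hangle, hπb]
  noncomm_ring
end

section
/- Let A be a special Z₂-graded associative algebra over a field k, with angle bracket ⟨x,y⟩ := x·π₀(y) − π₀(y)·x and square bracket [x,y] := x·y − y·x. Then the first right Hu-Liu identity holds: ⟨x,[y,z]⟩ = ⟨x,⟨y,z⟩⟩ for all x, y, z ∈ A. (part of Proposition 2.1) -/
/-- Part of Proposition 2.1: the first right Hu-Liu identity
⟨x,[y,z]⟩ = ⟨x,⟨y,z⟩⟩ holds in a special ℤ₂-graded associative algebra. -/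
theorem first_hu_liu_identity {k A : Type*} [Field k] [Ring A] [Algebra k A]
    (A₀ A₁ : Submodule k A)
    (hsup : A₀ ⊔ A₁ = ⊤) (hinf : A₀ ⊓ A₁ = ⊥)
    (h00 : ∀ a ∈ A₀, ∀ b ∈ A₀, a * b ∈ A₀)
    (h01 : ∀ a ∈ A₀, ∀ b ∈ A₁, a * b ∈ A₁)
    (h10 : ∀ a ∈ A₁, ∀ b ∈ A₀, a * b ∈ A₁)
    (h11 : ∀ a ∈ A₁, ∀ b ∈ A₁, a * b = 0)
    (π₀ : A →ₗ[k] A)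
    (hπmem : ∀ x : A, π₀ x ∈ A₀)
    (hπrest : ∀ x : A, x - π₀ x ∈ A₁)
    (angle square : A → A → A)
    (hangle : ∀ x y : A, angle x y = x * π₀ y - π₀ y * x)
    (hsquare : ∀ x y : A, square x y = x * y - y * x)
    (x y z : A) :
    angle x (square y z) = angle x (angle y z) := by
  have hπA₁ : ∀ a ∈ A₁, π₀ a = 0 := by
    intro a ha
    have h1 : π₀ a ∈ A₁ := by
      have := A₁.sub_mem ha (hπrest a)
      simpa using this
    have hb : π₀ a ∈ A₀ ⊓ A₁ := ⟨hπmem a, h1⟩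
    rw [hinf] at hb
    simpa using hb
  have hmul1 : ∀ w : A, ∀ b ∈ A₁, w * b ∈ A₁ := by
    intro w b hb
    have hw : w * b = π₀ w * b + (w - π₀ w) * b := by noncomm_ring
    rw [hw]
    exact A₁.add_mem (h01 _ (hπmem w) _ hb)
      (by rw [h11 _ (hπrest w) _ hb]; exact A₁.zero_mem)
  have hmul2 : ∀ w : A, ∀ b ∈ A₁, b * w ∈ A₁ := by
    intro w b hb
    have hw : b * w = b * π₀ w + b * (w - π₀ w) := by noncomm_ring
    rw [hw]
    exact A₁.add_mem (h10 _ hb _ (hπmem w))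
      (by rw [h11 _ hb _ (hπrest w)]; exact A₁.zero_mem)
  have hdiff : square y z - angle y z ∈ A₁ := by
    rw [hsquare, hangle]
    have h : y * z - z * y - (y * π₀ z - π₀ z * y)
        = y * (z - π₀ z) - (z - π₀ z) * y := by noncomm_ring
    rw [h]
    exact A₁.sub_mem (hmul1 y _ (hπrest z)) (hmul2 y _ (hπrest z))
  have key : π₀ (square y z) = π₀ (angle y z) := by
    have h := hπA₁ _ hdiff
    rw [map_sub] at h
    exact sub_eq_zero.mp h
  rw [hangle, hangle, key]
end

section
/- Let A be a special Z₂-graded associative algebra over a field k, with angle bracket ⟨x,y⟩ := x·π₀(y) − π₀(y)·x and square bracket [x,y] := x·y − y·x. Then the second right Hu-Liu identity holds: [⟨x,x⟩,y] = ⟨⟨x,x⟩,y⟩ for all x, y ∈ A. (part of Proposition 2.1) -/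
/-- Part of Proposition 2.1: the second right Hu-Liu identity
[⟨x,x⟩,y] = ⟨⟨x,x⟩,y⟩ holds in a special ℤ₂-graded associative algebra. -/
theorem second_hu_liu_identity {k A : Type*} [Field k] [Ring A] [Algebra k A]
    (A₀ A₁ : Submodule k A)
    (hsup : A₀ ⊔ A₁ = ⊤) (hinf : A₀ ⊓ A₁ = ⊥)
    (h00 : ∀ a ∈ A₀, ∀ b ∈ A₀, a * b ∈ A₀)
    (h01 : ∀ a ∈ A₀, ∀ b ∈ A₁, a * b ∈ A₁)
    (h10 : ∀ a ∈ A₁, ∀ b ∈ A₀, a * b ∈ A₁)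
    (h11 : ∀ a ∈ A₁, ∀ b ∈ A₁, a * b = 0)
    (π₀ : A →ₗ[k] A)
    (hπmem : ∀ x : A, π₀ x ∈ A₀)
    (hπrest : ∀ x : A, x - π₀ x ∈ A₁)
    (angle square : A → A → A)
    (hangle : ∀ x y : A, angle x y = x * π₀ y - π₀ y * x)
    (hsquare : ∀ x y : A, square x y = x * y - y * x)
    (x y : A) :
    square (angle x x) y = angle (angle x x) y := by
  have hc : angle x x ∈ A₁ := by
    have h1 : (x - π₀ x) * π₀ x ∈ A₁ := h10 _ (hπrest x) _ (hπmem x)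
    have h2 : π₀ x * (x - π₀ x) ∈ A₁ := h01 _ (hπmem x) _ (hπrest x)
    have : (x - π₀ x) * π₀ x - π₀ x * (x - π₀ x) = x * π₀ x - π₀ x * x := by noncomm_ring
    rw [hangle, ← this]
    exact A₁.sub_mem h1 h2
  have e1 : angle x x * (y - π₀ y) = 0 := h11 _ hc _ (hπrest y)
  have e2 : (y - π₀ y) * angle x x = 0 := h11 _ (hπrest y) _ hc
  rw [hsquare, hangle (angle x x) y]
  have key : angle x x * y - y * angle x x - (angle x x * π₀ y - π₀ y * angle x x)
      = angle x x * (y - π₀ y) - (y - π₀ y) * angle x x := by noncomm_ring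
  rw [e1, e2, sub_zero] at key
  exact sub_eq_zero.mp key
end

section
/- Let A be a special Z₂-graded associative algebra over a field k, with angle bracket ⟨x,y⟩ := x·π₀(y) − π₀(y)·x and square bracket [x,y] := x·y − y·x. Then the third right Hu-Liu identity holds: ⟨[x,y],z⟩ + [⟨y,z⟩,x] + [y,⟨x,z⟩] = 0 for all x, y, z ∈ A. (part of Proposition 2.1) -/
/-- Part of Proposition 2.1: the third right Hu-Liu identity
⟨[x,y],z⟩ + [⟨y,z⟩,x] + [y,⟨x,z⟩] = 0 holds in a special ℤ₂-graded associative algebra. -/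
theorem third_hu_liu_identity {k A : Type*} [Field k] [Ring A] [Algebra k A]
    (A₀ A₁ : Submodule k A)
    (hsup : A₀ ⊔ A₁ = ⊤) (hinf : A₀ ⊓ A₁ = ⊥)
    (h00 : ∀ a ∈ A₀, ∀ b ∈ A₀, a * b ∈ A₀)
    (h01 : ∀ a ∈ A₀, ∀ b ∈ A₁, a * b ∈ A₁)
    (h10 : ∀ a ∈ A₁, ∀ b ∈ A₀, a * b ∈ A₁)
    (h11 : ∀ a ∈ A₁, ∀ b ∈ A₁, a * b = 0)
    (π₀ : A →ₗ[k] A)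
    (hπmem : ∀ x : A, π₀ x ∈ A₀)
    (hπrest : ∀ x : A, x - π₀ x ∈ A₁)
    (angle square : A → A → A)
    (hangle : ∀ x y : A, angle x y = x * π₀ y - π₀ y * x)
    (hsquare : ∀ x y : A, square x y = x * y - y * x)
    (x y z : A) :
    angle (square x y) z + square (angle y z) x + square y (angle x z) = 0 := by
  simp only [hangle, hsquare]
  noncomm_ring
end

section
/- Let A be a special Z₂-graded associative algebra over a field k, with angle bracket ⟨x,y⟩ := x·π₀(y) − π₀(y)·x and square bracket [x,y] := x·y − y·x. Then the fourth right Hu-Liu identity holds: [⟨x,y⟩,z] + [z,[x,y]] + [z,⟨y,x⟩] + ⟨z,⟨x,y⟩⟩ = 0 for all x, y, z ∈ A. (part of Proposition 2.1) -/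
/-- Pure ring identity: the Hu-Liu sum reduces to commutator terms in `u*v`, `v*u`. -/
lemma hu_liu_key {A : Type*} [Ring A] (a b u v z : A) (huv : u * v = 0) (hvu : v * u = 0) :
    (((a+u) * b - b * (a+u)) * z - z * ((a+u) * b - b * (a+u)))
      + (z * ((a+u) * (b+v) - (b+v) * (a+u)) - ((a+u) * (b+v) - (b+v) * (a+u)) * z)
      + (z * ((b+v) * a - a * (b+v)) - ((b+v) * a - a * (b+v)) * z)
      + (z * (a * b - b * a) - (a * b - b * a) * z) = 0 := by
  have h : (((a+u) * b - b * (a+u)) * z - z * ((a+u) * b - b * (a+u)))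
      + (z * ((a+u) * (b+v) - (b+v) * (a+u)) - ((a+u) * (b+v) - (b+v) * (a+u)) * z)
      + (z * ((b+v) * a - a * (b+v)) - ((b+v) * a - a * (b+v)) * z)
      + (z * (a * b - b * a) - (a * b - b * a) * z)
      = z * (u * v) - z * (v * u) - (u * v) * z + (v * u) * z := by noncomm_ring
  rw [h, huv, hvu]
  simp

/-- Part of Proposition 2.1: the fourth right Hu-Liu identity
[⟨x,y⟩,z] + [z,[x,y]] + [z,⟨y,x⟩] + ⟨z,⟨x,y⟩⟩ = 0 holds in a special
ℤ₂-graded associative algebra. -/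
theorem fourth_hu_liu_identity {k A : Type*} [Field k] [Ring A] [Algebra k A]
    (A₀ A₁ : Submodule k A)
    (hsup : A₀ ⊔ A₁ = ⊤) (hinf : A₀ ⊓ A₁ = ⊥)
    (h00 : ∀ a ∈ A₀, ∀ b ∈ A₀, a * b ∈ A₀)
    (h01 : ∀ a ∈ A₀, ∀ b ∈ A₁, a * b ∈ A₁)
    (h10 : ∀ a ∈ A₁, ∀ b ∈ A₀, a * b ∈ A₁)
    (h11 : ∀ a ∈ A₁, ∀ b ∈ A₁, a * b = 0)
    (π₀ : A →ₗ[k] A)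
    (hπmem : ∀ x : A, π₀ x ∈ A₀)
    (hπrest : ∀ x : A, x - π₀ x ∈ A₁)
    (angle square : A → A → A)
    (hangle : ∀ x y : A, angle x y = x * π₀ y - π₀ y * x)
    (hsquare : ∀ x y : A, square x y = x * y - y * x)
    (x y z : A) :
    square (angle x y) z + square z (square x y) + square z (angle y x)
      + angle z (angle x y) = 0 := by
  -- π₀ fixes A₀ and kills A₁
  have pfix : ∀ w ∈ A₀, π₀ w = w := by
    intro w hw
    have h1 : w - π₀ w ∈ A₀ ⊓ A₁ := ⟨sub_mem hw (hπmem w), hπrest w⟩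
    rw [hinf, Submodule.mem_bot] at h1
    exact (sub_eq_zero.mp h1).symm
  have pzero : ∀ w ∈ A₁, π₀ w = 0 := by
    intro w hw
    have h1 : π₀ w ∈ A₀ ⊓ A₁ := ⟨hπmem w, by
      have := sub_mem hw (hπrest w)
      simpa using this⟩
    rw [hinf, Submodule.mem_bot] at h1
    exact h1
  set a := π₀ x with hadef
  set b := π₀ y with hbdef
  have ha : a ∈ A₀ := hπmem x
  have hb : b ∈ A₀ := hπmem y
  have hu : x - a ∈ A₁ := hπrest x
  have hv : y - b ∈ A₁ := hπrest y
  set u := x - a with hudef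
  set v := y - b with hvdef
  have hx : x = a + u := by rw [hudef]; abel
  have hy : y = b + v := by rw [hvdef]; abel
  have huv : u * v = 0 := h11 u hu v hv
  have hvu : v * u = 0 := h11 v hv u hu
  -- π₀ of the angle bracket
  have pxb : π₀ (x * b) = a * b := by
    rw [hx, add_mul, map_add, pfix _ (h00 a ha b hb), pzero _ (h10 u hu b hb), add_zero]
  have pbx : π₀ (b * x) = b * a := by
    rw [hx, mul_add, map_add, pfix _ (h00 b hb a ha), pzero _ (h01 b hb u hu), add_zero]
  have pang : π₀ (x * b - b * x) = a * b - b * a := by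
    rw [map_sub, pxb, pbx]
  simp only [hsquare, hangle]
  have p1 : π₀ (a + u) = a := by rw [map_add, pfix a ha, pzero u hu, add_zero]
  have p2 : π₀ (b + v) = b := by rw [map_add, pfix b hb, pzero v hv, add_zero]
  rw [pang, hx, hy, p1, p2]
  exact hu_liu_key a b u v z huv hvu
end

section
/- Let L be a right Hu-Liu Leibniz algebra over a field k. Then the annihilator L^ann is an Abelian ideal of the Lie algebra (L, [·,·]): [a, b] = 0 for all a, b ∈ L^ann. -/
/-- In a right Hu-Liu Leibniz algebra, the annihilator L^ann is an Abelian ideal of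
the underlying Lie algebra: [a,b] = 0 for all a, b ∈ L^ann. -/
theorem annihilator_abelian {k L : Type*} [Field k] [AddCommGroup L] [Module k L]
    (angle square : L →ₗ[k] L →ₗ[k] L)
    (leib : ∀ x y z : L, angle (angle x y) z = angle x (angle y z) + angle (angle x z) y)
    (sq_self : ∀ x : L, square x x = 0)
    (jacobi : ∀ x y z : L,
      square (square x y) z + square (square y z) x + square (square z x) y = 0)
    (hl1 : ∀ x y z : L, angle x (square y z) = angle x (angle y z))
    (hl2 : ∀ x y : L, square (angle x x) y = angle (angle x x) y)
    (hl3 : ∀ x y z : L, angle (square x y) z + square (angle y z) x + square y (angle x z) = 0)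
    (hl4 : ∀ x y z : L, square (angle x y) z + square z (square x y) + square z (angle y x)
      + angle z (angle x y) = 0)
    :
    ∀ a ∈ Submodule.span k {z : L | ∃ w : L, z = angle w w},
      ∀ b ∈ Submodule.span k {z : L | ∃ w : L, z = angle w w},
        square a b = 0 := by
  -- Step 1: ⟨x, ⟨y,y⟩⟩ = 0 for all x, y (take y = z in the Leibniz identity).
  have key : ∀ x y : L, angle x (angle y y) = 0 := by
    intro x y
    have h := leib x y y
    have : angle x (angle y y) + angle (angle x y) y = 0 + angle (angle x y) y := by
      rw [zero_add, ← h]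
    exact add_right_cancel this
  -- Step 2: ⟨w, b⟩ = 0 for any w and any b in the span.
  have key2 : ∀ w : L, ∀ b ∈ Submodule.span k {z : L | ∃ w : L, z = angle w w},
      angle w b = 0 := by
    intro w b hb
    induction hb using Submodule.span_induction with
    | mem x hx => obtain ⟨u, rfl⟩ := hx; exact key w u
    | zero => simp
    | add x y _ _ hx hy => rw [map_add, hx, hy, add_zero]
    | smul c x _ hx => rw [map_smul, hx, smul_zero]
  intro a ha b hb
  induction ha using Submodule.span_induction with
  | mem x hx =>
      obtain ⟨u, rfl⟩ := hx
      rw [hl2, key2 (angle u u) b hb]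
  | zero => simp
  | add x y _ _ hx hy =>
      rw [map_add, LinearMap.add_apply, hx, hy, add_zero]
  | smul c x _ hx =>
      rw [map_smul, LinearMap.smul_apply, hx, smul_zero]
end

section
/- Let L be a simple right Leibniz algebra over a field k such that ⟨L^ann, L⟩ ≠ 0. Then L is linear: there exist an associative k-algebra A with submodules A₀, A₁ making A a special Z₂-graded associative algebra, and an injective k-linear map φ : L → A satisfying φ(⟨x,y⟩) = φ(x)·π₀(φ(y)) − π₀(φ(y))·φ(x) for all x, y ∈ L. (Proposition 1.2) -/
universe u v

/-- A special ℤ₂-graded associative algebra over a field `k`: an associative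
`k`-algebra which is the internal direct sum of submodules A₀ ⊕ A₁ with
A₀A₀ ⊆ A₀, A₀A₁ + A₁A₀ ⊆ A₁ and A₁A₁ = 0, together with the projection π₀
onto A₀ along A₁. -/
structure SpecialZ2GradedAlgebra (k : Type u) [Field k] : Type (max u (v + 1)) where
  carrier : Type v
  [instRing : Ring carrier]
  [instAlgebra : Algebra k carrier]
  A₀ : Submodule k carrier
  A₁ : Submodule k carrier
  sup_eq : A₀ ⊔ A₁ = ⊤
  inf_eq : A₀ ⊓ A₁ = ⊥
  mul_mem₀₀ : ∀ a ∈ A₀, ∀ b ∈ A₀, a * b ∈ A₀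
  mul_mem₀₁ : ∀ a ∈ A₀, ∀ b ∈ A₁, a * b ∈ A₁
  mul_mem₁₀ : ∀ a ∈ A₁, ∀ b ∈ A₀, a * b ∈ A₁
  mul_eq_zero₁₁ : ∀ a ∈ A₁, ∀ b ∈ A₁, a * b = 0
  π₀ : carrier →ₗ[k] carrier
  π₀_mem : ∀ x : carrier, π₀ x ∈ A₀
  sub_π₀_mem : ∀ x : carrier, x - π₀ x ∈ A₁

attribute [instance] SpecialZ2GradedAlgebra.instRing SpecialZ2GradedAlgebra.instAlgebra

/-! Write `Rₓ = ⟨·, x⟩` and `Lₓ = ⟨x, ·⟩` in `E = End_k L`. The right Leibniz identity says exactly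
that `R⟨x,y⟩ = R_y Rₓ - Rₓ R_y` and `L⟨x,y⟩ = R_y Lₓ - Lₓ R_y`, so `x ↦ -Rₓ + ε Lₓ` into the dual
numbers `E[ε]`, graded as `E ⊕ εE`, turns the bracket into `⟨a, b⟩ = a π₀(b) - π₀(b) a`. Its kernel
is the two-sided annihilator `{a | ⟨a, L⟩ = ⟨L, a⟩ = 0}`, an ideal; by simplicity it is `0`, `L^ann`
or `L`, and `⟨L^ann, L⟩ ≠ 0` rules out the last two. -/

open TrivSqZeroExt

section Leibniz

variable {k : Type*} {L : Type*} [CommRing k] [AddCommGroup L] [Module k L]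
  (br : L →ₗ[k] L →ₗ[k] L)

theorem flip_bracket_of_leibniz
    (leib : ∀ x y z : L, br (br x y) z = br x (br y z) + br (br x z) y) (x y : L) :
    br.flip (br x y) = br.flip y * br.flip x - br.flip x * br.flip y := by
  ext z
  simp [leib z x y]

theorem bracket_bracket_of_leibniz
    (leib : ∀ x y z : L, br (br x y) z = br x (br y z) + br (br x z) y) (x y : L) :
    br (br x y) = br.flip y * br x - br x * br.flip y := by
  ext z
  simp [leib x z y]

def leibnizCenter : Submodule k L :=
  LinearMap.ker br ⊓ LinearMap.ker br.flip

theorem bracket_mem_leibnizCenter {a : L} (ha : a ∈ leibnizCenter br) (z : L) :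
    br a z ∈ leibnizCenter br ∧ br z a ∈ leibnizCenter br := by
  obtain ⟨ha₁, ha₂⟩ := ha
  rw [SetLike.mem_coe, LinearMap.mem_ker] at ha₁ ha₂
  rw [ha₁, ← LinearMap.flip_apply br, ha₂]
  exact ⟨zero_mem _, zero_mem _⟩

theorem leibnizCenter_eq_bot {J : Submodule k L}
    (hsimple : ∀ I : Submodule k L,
      (∀ a ∈ I, ∀ z : L, br a z ∈ I ∧ br z a ∈ I) → I = ⊥ ∨ I = J ∨ I = ⊤)
    (hJ : ∃ a ∈ J, ∃ z : L, br a z ≠ 0) :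
    leibnizCenter br = ⊥ := by
  obtain ⟨a, haJ, z, haz⟩ := hJ
  have ha : a ∉ leibnizCenter br := fun ha => haz (by rw [ha.1]; rfl)
  rcases hsimple _ fun a ha z => bracket_mem_leibnizCenter br ha z with h | h | h
  · exact h
  · exact absurd (h ▸ haJ) ha
  · exact absurd (h ▸ Submodule.mem_top) ha

def leibnizEmbedding : L →ₗ[k] DualNumber (Module.End k L) where
  toFun x := inl (-br.flip x) + inr (br x)
  map_add' x y := by
    ext <;> simp only [map_add, fst_add, snd_add, fst_inl, snd_inl, fst_inr, snd_inr, neg_add,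
      add_zero, zero_add]
  map_smul' c x := by ext <;> simp

theorem ker_leibnizEmbedding : LinearMap.ker (leibnizEmbedding br) = leibnizCenter br := by
  ext x
  simp [leibnizEmbedding, leibnizCenter, TrivSqZeroExt.ext_iff, and_comm]

theorem leibnizEmbedding_bracket
    (leib : ∀ x y z : L, br (br x y) z = br x (br y z) + br (br x z) y) (x y : L) :
    leibnizEmbedding br (br x y)
      = leibnizEmbedding br x * inl (leibnizEmbedding br y).fst
        - inl (leibnizEmbedding br y).fst * leibnizEmbedding br x := by
  simp only [leibnizEmbedding, LinearMap.coe_mk, AddHom.coe_mk]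
  refine TrivSqZeroExt.ext ?_ ?_
  · simp only [fst_sub, fst_mul, fst_add, fst_inl, fst_inr, add_zero, neg_mul_neg,
      flip_bracket_of_leibniz br leib, neg_sub]
  · simp only [snd_sub, snd_mul, snd_add, fst_add, snd_inl, snd_inr, fst_inl, fst_inr, add_zero,
      zero_add, smul_zero, op_smul_eq_mul, smul_eq_mul, mul_zero, mul_neg, neg_mul, sub_neg_eq_add,
      bracket_bracket_of_leibniz br leib]
    abel

end Leibniz

namespace TrivSqZeroExt

variable (k : Type u) (R M : Type v) [Field k] [Ring R] [Algebra k R] [AddCommGroup M]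
  [Module k M] [Module R M] [Module Rᵐᵒᵖ M] [SMulCommClass R Rᵐᵒᵖ M]
  [IsScalarTower k R M] [IsScalarTower k Rᵐᵒᵖ M]

def toSpecialZ2GradedAlgebra : SpecialZ2GradedAlgebra.{u, v} k where
  carrier := TrivSqZeroExt R M
  A₀ := Subalgebra.toSubmodule (inlAlgHom k R M).range
  A₁ := LinearMap.ker (fstHom k R M).toLinearMap
  sup_eq := by
    refine eq_top_iff.mpr fun x _ => ?_
    rw [← inl_fst_add_inr_snd_eq x]
    exact Submodule.add_mem_sup ⟨x.fst, rfl⟩ (fst_inr R x.snd)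
  inf_eq := by
    refine eq_bot_iff.mpr fun x ⟨⟨r, hr⟩, hx⟩ => ?_
    have hr0 : r = 0 := by simpa [← hr] using hx
    rw [Submodule.mem_bot, ← hr, hr0, map_zero]
  mul_mem₀₀ _ ha _ hb := Subalgebra.mul_mem _ ha hb
  mul_mem₀₁ a _ b hb := by
    simp only [LinearMap.mem_ker, AlgHom.toLinearMap_apply, map_mul] at hb ⊢
    rw [hb, mul_zero]
  mul_mem₁₀ a ha b _ := by
    simp only [LinearMap.mem_ker, AlgHom.toLinearMap_apply, map_mul] at ha ⊢
    rw [ha, zero_mul]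
  mul_eq_zero₁₁ a ha b hb := by
    simp only [LinearMap.mem_ker, AlgHom.toLinearMap_apply, fstHom_apply] at ha hb
    exact TrivSqZeroExt.ext (by simp [ha]) (by simp [ha, hb])
  π₀ := (inlAlgHom k R M).toLinearMap ∘ₗ (fstHom k R M).toLinearMap
  π₀_mem x := ⟨x.fst, rfl⟩
  sub_π₀_mem x := by simp

end TrivSqZeroExt

theorem simple_leibniz_is_linear_general {k : Type u} {L : Type v} [Field k]
    [AddCommGroup L] [Module k L]
    (br : L →ₗ[k] L →ₗ[k] L)
    (leib : ∀ x y z : L, br (br x y) z = br x (br y z) + br (br x z) y)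
    (hsimple : ∀ I : Submodule k L,
      (∀ a ∈ I, ∀ z : L, br a z ∈ I ∧ br z a ∈ I) →
        I = ⊥ ∨ I = Submodule.span k {z : L | ∃ w : L, z = br w w} ∨ I = ⊤)
    (hbr_ne : ∃ a ∈ Submodule.span k {z : L | ∃ w : L, z = br w w}, ∃ z : L, br a z ≠ 0) :
    ∃ (S : SpecialZ2GradedAlgebra.{u, v} k) (φ : L →ₗ[k] S.carrier),
      Function.Injective φ
        ∧ ∀ x y : L, φ (br x y) = φ x * S.π₀ (φ y) - S.π₀ (φ y) * φ x := by
  have hker : LinearMap.ker (leibnizEmbedding br) = ⊥ := by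
    rw [ker_leibnizEmbedding, leibnizCenter_eq_bot br hsimple hbr_ne]
  exact ⟨TrivSqZeroExt.toSpecialZ2GradedAlgebra k (Module.End k L) (Module.End k L),
    leibnizEmbedding br, LinearMap.ker_eq_bot.mp hker, leibnizEmbedding_bracket br leib⟩

/-- Proposition 1.2: a simple right Leibniz algebra L with ⟨L^ann, L⟩ ≠ 0 is linear,
i.e. it embeds into the Leibniz algebra of a special ℤ₂-graded associative algebra
with bracket ⟨a,b⟩ = a·π₀(b) − π₀(b)·a. -/
theorem simple_leibniz_is_linear {k : Type u} {L : Type v} [Field k]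
    [AddCommGroup L] [Module k L]
    (br : L →ₗ[k] L →ₗ[k] L)
    (leib : ∀ x y z : L, br (br x y) z = br x (br y z) + br (br x z) y)
    (hann_ne : Submodule.span k {z : L | ∃ w : L, z = br w w} ≠ ⊥)
    (hsimple : ∀ I : Submodule k L,
      (∀ a ∈ I, ∀ z : L, br a z ∈ I ∧ br z a ∈ I) →
        I = ⊥ ∨ I = Submodule.span k {z : L | ∃ w : L, z = br w w} ∨ I = ⊤)
    (hbr_ne : ∃ a ∈ Submodule.span k {z : L | ∃ w : L, z = br w w}, ∃ z : L, br a z ≠ 0) :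
    ∃ (S : SpecialZ2GradedAlgebra.{u, v} k) (φ : L →ₗ[k] S.carrier),
      Function.Injective φ
        ∧ ∀ x y : L, φ (br x y) = φ x * S.π₀ (φ y) - S.π₀ (φ y) * φ x :=
  simple_leibniz_is_linear_general br leib hsimple hbr_ne
end

section
/- Let A be a real Banach algebra with identity 1 and let G be a subgroup of the group of units of A. Then the tangent space T₁(G) is a real vector subspace of A: 0 ∈ T₁(G), and if X, Y ∈ T₁(G) and λ ∈ ℝ, then X + Y ∈ T₁(G) and λX ∈ T₁(G). -/
/-! The pointwise product of two curves through `1` in `G` is again such a curve, and by the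
product rule (in noncommutative form, `a' b + a b'` at `0`, where both factors equal `1`) its
velocity is the sum of the velocities. Reparametrizing `t ↦ a (c t)` scales the velocity
by `c`. -/

/-- The tangent space at 1 to a subgroup `G` of the units of a normed algebra `A`:
all derivatives `a'(0)` of curves `a : ℝ → A` that take values in `G`, satisfy
`a 0 = 1`, and are differentiable at `0`. -/
def tangentSpaceAtOne {A : Type*} [NormedRing A] [NormedAlgebra ℝ A]
    (G : Subgroup Aˣ) : Set A :=
  {X : A | ∃ a : ℝ → A, (∀ t : ℝ, ∃ g ∈ G, a t = (g : A)) ∧ a 0 = 1 ∧ HasDerivAt a X 0}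

section TangentSpaceAtOne

variable {A : Type*} [NormedRing A] [NormedAlgebra ℝ A] (G : Subgroup Aˣ)

theorem zero_mem_tangentSpaceAtOne : (0 : A) ∈ tangentSpaceAtOne G :=
  ⟨fun _ => 1, fun _ => ⟨1, G.one_mem, rfl⟩, rfl, hasDerivAt_const 0 1⟩

theorem add_mem_tangentSpaceAtOne {X Y : A} (hX : X ∈ tangentSpaceAtOne G)
    (hY : Y ∈ tangentSpaceAtOne G) : X + Y ∈ tangentSpaceAtOne G := by
  obtain ⟨a, haG, ha0, ha⟩ := hX
  obtain ⟨b, hbG, hb0, hb⟩ := hY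
  refine ⟨a * b, fun t => ?_, by rw [Pi.mul_apply, ha0, hb0, one_mul], ?_⟩
  · obtain ⟨g, hg, hgt⟩ := haG t
    obtain ⟨h, hh, hht⟩ := hbG t
    exact ⟨g * h, G.mul_mem hg hh, by rw [Pi.mul_apply, hgt, hht, Units.val_mul]⟩
  · simpa only [ha0, hb0, mul_one, one_mul] using ha.mul hb

theorem smul_mem_tangentSpaceAtOne (c : ℝ) {X : A} (hX : X ∈ tangentSpaceAtOne G) :
    c • X ∈ tangentSpaceAtOne G := by
  obtain ⟨a, haG, ha0, ha⟩ := hX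
  refine ⟨fun t => a (c * t), fun t => haG (c * t), by simpa only [mul_zero] using ha0, ?_⟩
  have ha' : HasDerivAt a X (c * 0) := by rwa [mul_zero]
  exact ha'.scomp 0 (hasDerivAt_const_mul c)

def tangentSpaceAtOneSubmodule : Submodule ℝ A where
  carrier := tangentSpaceAtOne G
  zero_mem' := zero_mem_tangentSpaceAtOne G
  add_mem' := add_mem_tangentSpaceAtOne G
  smul_mem' := smul_mem_tangentSpaceAtOne G

end TangentSpaceAtOne

theorem tangentSpaceAtOne_subspace_general {A : Type*} [NormedRing A] [NormedAlgebra ℝ A]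
    (G : Subgroup Aˣ) :
    (0 : A) ∈ tangentSpaceAtOne G
      ∧ (∀ X ∈ tangentSpaceAtOne G, ∀ Y ∈ tangentSpaceAtOne G,
          X + Y ∈ tangentSpaceAtOne G)
      ∧ (∀ (lam : ℝ), ∀ X ∈ tangentSpaceAtOne G, lam • X ∈ tangentSpaceAtOne G) :=
  let T := tangentSpaceAtOneSubmodule G
  ⟨T.zero_mem, fun _ hX _ hY => T.add_mem hX hY, fun lam _ hX => T.smul_mem lam hX⟩

/-- The tangent space at 1 to a subgroup of the units of a real Banach algebra is a
real vector subspace: it contains 0 and is closed under addition and scalar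
multiplication. -/
theorem tangentSpaceAtOne_subspace {A : Type*} [NormedRing A] [NormedAlgebra ℝ A]
    [CompleteSpace A] (G : Subgroup Aˣ) :
    (0 : A) ∈ tangentSpaceAtOne G
      ∧ (∀ X ∈ tangentSpaceAtOne G, ∀ Y ∈ tangentSpaceAtOne G,
          X + Y ∈ tangentSpaceAtOne G)
      ∧ (∀ (lam : ℝ), ∀ X ∈ tangentSpaceAtOne G, lam • X ∈ tangentSpaceAtOne G) :=
  tangentSpaceAtOne_subspace_general G
end
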